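/- Let Q be a quiver with property (P) and d a dimension vector with d ≠ (1,...,1) on its support. Assume Crawley-Boevey's bound: every top-type stratum of X(Q,d) = μ_{Q,d}^{-1}(0) lying over the deepest quotient stratum has dimension at most d·d − 1 + (1 − ⟨d,d⟩) + Σ_s m_s z_s − Σ_s m_s²(1 − ⟨dim N_{j_s}, dim N_{j_s}⟩). Then dim Z(Q,d) < 2(1 − ⟨d,d⟩) = dim M(Q,d), where Z(Q,d) is the fiber of the quotient map over the image of 0. -/

import Mathlib

/-!
With at least two loops at every vertex, `⟨ε_i, ε_i⟩ ≤ -1`, and already the loop terms of the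
Euler form give `⟨d, d⟩ ≤ -d·d`. Each nonzero `z_s` is the multiplicity `m_t` of the last earlier
position `t` with the same label, and distinct `s` give distinct `t`, so `∑ z_s² ≤ ∑ m_s²` and,
by AM-GM, `∑ m_s z_s ≤ ∑ m_s²`. Hence Crawley-Boevey's bound is at most
`d·d - 1 + (1 - ⟨d,d⟩) - ∑ m_s²`, which is less than `2 (1 - ⟨d,d⟩)` because `d·d ≤ -⟨d,d⟩`.
-/

open Finset

section

variable {V A : Type} [Fintype V] [Fintype A] [DecidableEq V]
  (src tgt : A → V) (d : V → ℕ)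

/-- The Euler form of a quiver. -/
def eulerForm (e e' : V → ℤ) : ℤ :=
  (∑ i : V, e i * e' i) - ∑ a : A, e (src a) * e' (tgt a)

/-- The coordinate vector `ε_i`. -/
def eps (i : V) : V → ℤ := fun j => if j = i then 1 else 0

/-- Source map of the doubled quiver `Q̄`. -/
abbrev dsrc : A ⊕ A → V := fun a => Sum.rec (fun a => src a) (fun a => tgt a) a

/-- Target map of the doubled quiver `Q̄`. -/
abbrev dtgt : A ⊕ A → V := fun a => Sum.rec (fun a => tgt a) (fun a => src a) a

variable (K : Type) [Field K] [IsAlgClosed K] [CharZero K]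

/-- The representation space `R(Q̄,d)` of the doubled quiver. -/
abbrev RepSpace : Type :=
  ∀ a : A ⊕ A, Matrix (Fin (d (dtgt src tgt a))) (Fin (d (dsrc src tgt a))) K

/-- Transport of a square matrix along an equality of sizes. -/
def castSq {n n' : ℕ} (h : n = n') (M : Matrix (Fin n) (Fin n) K) :
    Matrix (Fin n') (Fin n') K :=
  M.submatrix (Fin.cast h.symm) (Fin.cast h.symm)

/-- The moment map `μ_{Q,d} : R(Q̄,d) → gl(d)`, with `i`-th component
`∑_{t(a)=i} x_a y_a − ∑_{s(a)=i} y_a x_a`. -/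
def momentMap (w : RepSpace src tgt d K) (i : V) :
    Matrix (Fin (d i)) (Fin (d i)) K :=
  (∑ a : A, if h : tgt a = i then
      castSq K (congrArg d h)
        ((w (Sum.inl a) : Matrix (Fin (d (tgt a))) (Fin (d (src a))) K)
          * (w (Sum.inr a) : Matrix (Fin (d (src a))) (Fin (d (tgt a))) K)) else 0)
  - ∑ a : A, if h : src a = i then
      castSq K (congrArg d h)
        ((w (Sum.inr a) : Matrix (Fin (d (src a))) (Fin (d (tgt a))) K)
          * (w (Sum.inl a) : Matrix (Fin (d (tgt a))) (Fin (d (src a))) K)) else 0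

/-- `X(Q,d) = μ_{Q,d}^{-1}(0)`. -/
def momentFiber : Set (RepSpace src tgt d K) :=
  {w | ∀ i : V, momentMap src tgt d K w i = 0}

/-- The Zariski topology on the representation space, induced from the
Zariski topology (generated by complements of hypersurfaces) on the
coordinate space. -/
def repTop : TopologicalSpace (RepSpace src tgt d K) :=
  TopologicalSpace.induced
    (fun w (v : Σ a : A ⊕ A,
        Fin (d (dtgt src tgt a)) × Fin (d (dsrc src tgt a))) => w v.1 v.2.1 v.2.2)
    (TopologicalSpace.generateFrom
      {U | ∃ p : MvPolynomial
          (Σ a : A ⊕ A, Fin (d (dtgt src tgt a)) × Fin (d (dsrc src tgt a))) K,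
        U = {x | MvPolynomial.eval x p ≠ 0}})

/-- The `GL(d)`-orbit of a point of the representation space. -/
def glOrbit (w : RepSpace src tgt d K) : Set (RepSpace src tgt d K) :=
  {w' | ∃ g : ∀ i : V, GL (Fin (d i)) K, ∀ a : A ⊕ A,
    w' a = (g (dtgt src tgt a) : Matrix (Fin (d (dtgt src tgt a))) (Fin (d (dtgt src tgt a))) K) * w a
      * (((g (dsrc src tgt a))⁻¹ : GL (Fin (d (dsrc src tgt a))) K) : Matrix (Fin (d (dsrc src tgt a))) (Fin (d (dsrc src tgt a))) K)}

/-- The deepest stratum `Z(Q,d)`: the fiber of the quotient map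
`X(Q,d) → M(Q,d)` over the image of `0`, i.e. the points of `μ_{Q,d}^{-1}(0)`
whose `GL(d)`-orbit closure contains `0` (those with semisimplification of
type `τ_min`). -/
def deepStratum : Set (RepSpace src tgt d K) :=
  letI := repTop src tgt d K
  {w ∈ momentFiber src tgt d K | (0 : RepSpace src tgt d K) ∈ closure (glOrbit src tgt d K w)}

/-- The dimension of a subset of the representation space. -/
noncomputable def repDim (S : Set (RepSpace src tgt d K)) : WithBot ℕ∞ :=
  letI := repTop src tgt d K
  topologicalKrullDim S

/-- The quantity `z_s` of Crawley-Boevey's bound, for the semisimple type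
`τ_min` whose simples are the vertex simples: `z_s = 0` if
`⟨ε_{j_s}, ε_{j_s}⟩ = 1` or no `t < s` has `j_t = j_s`, and `z_s = m_t` for
the largest such `t` otherwise. -/
noncomputable def zCB {h : ℕ} (j : Fin h → V) (m : Fin h → ℕ) (s : Fin h) : ℤ :=
  if eulerForm src tgt (eps (j s)) (eps (j s)) = 1 then 0
  else if hP : (Finset.univ.filter (fun t : Fin h => t < s ∧ j t = j s)).Nonempty
    then (m ((Finset.univ.filter (fun t : Fin h => t < s ∧ j t = j s)).max' hP) : ℤ)
    else 0

/-- Crawley-Boevey's dimension bound (Proposition 2.7) for a top type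
`(j_s, m_s)` compatible with `τ_min`:
`d·d − 1 + (1 − ⟨d,d⟩) + ∑ m_s z_s − ∑ m_s² (1 − ⟨ε_{j_s}, ε_{j_s}⟩)`. -/
noncomputable def cbBound {h : ℕ} (j : Fin h → V) (m : Fin h → ℕ) : ℤ :=
  (∑ i : V, (d i : ℤ) ^ 2) - 1 + (1 - eulerForm src tgt (fun i => (d i : ℤ)) (fun i => (d i : ℤ)))
    + ∑ s : Fin h, (m s : ℤ) * zCB src tgt j m s
    - ∑ s : Fin h, (m s : ℤ) ^ 2 * (1 - eulerForm src tgt (eps (j s)) (eps (j s)))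

theorem eulerForm_eps_self (i : V) :
    eulerForm src tgt (eps i) (eps i) = 1 - (#{a | src a = i ∧ tgt a = i} : ℤ) := by
  simp [eulerForm, eps, ← ite_and, and_comm]

theorem sum_card_loops_mul_sq_le :
    ∑ i, (#{a | src a = i ∧ tgt a = i} : ℤ) * (d i : ℤ) ^ 2
      ≤ ∑ a, (d (src a) : ℤ) * d (tgt a) := by
  calc ∑ i, (#{a | src a = i ∧ tgt a = i} : ℤ) * (d i : ℤ) ^ 2
      = ∑ a, ∑ i, if src a = i ∧ tgt a = i then (d i : ℤ) ^ 2 else 0 := by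
        simp only [card_filter, Nat.cast_sum, Nat.cast_ite, Nat.cast_one, Nat.cast_zero,
          sum_mul, ite_mul, one_mul, zero_mul]
        exact sum_comm
    _ ≤ ∑ a, (d (src a) : ℤ) * d (tgt a) := by
        refine sum_le_sum fun a _ => ?_
        by_cases hloop : tgt a = src a
        · simp [hloop, sq]
        · rw [sum_eq_zero fun i _ => if_neg fun h => hloop (h.2.trans h.1.symm)]
          positivity

theorem eulerForm_le_sum_eulerForm_eps_mul_sq :
    eulerForm src tgt (fun i => (d i : ℤ)) (fun i => (d i : ℤ))
      ≤ ∑ i, eulerForm src tgt (eps i) (eps i) * (d i : ℤ) ^ 2 := by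
  have := sum_card_loops_mul_sq_le src tgt d
  simp only [eulerForm_eps_self, sub_mul, one_mul, sum_sub_distrib]
  rw [eulerForm]
  simp only [sq] at this ⊢
  linarith

theorem eulerForm_eps_self_le_neg_one
    (hloops : ∀ i : V, 2 ≤ #{a | src a = i ∧ tgt a = i}) (i : V) : eulerForm src tgt (eps i) (eps i) ≤ -1 := by
  have := hloops i
  rw [eulerForm_eps_self]
  omega

section SameLabel

variable {L : Type*} [DecidableEq L] {n : ℕ} (j : Fin n → L)

def earlierSameLabel (s : Fin n) : Finset (Fin n) := {t | t < s ∧ j t = j s}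

/-- Junk value `s` when `earlierSameLabel j s` is empty. -/
def prevSameLabel (s : Fin n) : Fin n :=
  if hs : (earlierSameLabel j s).Nonempty then (earlierSameLabel j s).max' hs else s

variable {j}

theorem prevSameLabel_lt_and_eq {s : Fin n} (hs : (earlierSameLabel j s).Nonempty) :
    prevSameLabel j s < s ∧ j (prevSameLabel j s) = j s := by
  rw [prevSameLabel, dif_pos hs]
  simpa [earlierSameLabel] using max'_mem _ hs

theorem le_prevSameLabel {t s : Fin n} (hts : t < s) (hj : j t = j s) :
    t ≤ prevSameLabel j s := by
  have ht : t ∈ earlierSameLabel j s := by simp [earlierSameLabel, hts, hj]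
  rw [prevSameLabel, dif_pos ⟨t, ht⟩]
  exact le_max' _ _ ht

theorem prevSameLabel_injOn :
    Set.InjOn (prevSameLabel j) {s | (earlierSameLabel j s).Nonempty} := by
  intro s hs s' hs' he
  by_contra hne
  wlog hlt : s < s' generalizing s s'
  · exact this hs' hs he.symm (Ne.symm hne) (lt_of_le_of_ne (not_lt.1 hlt) (Ne.symm hne))
  have hj : j s = j s' := by
    rw [← (prevSameLabel_lt_and_eq hs).2, he, (prevSameLabel_lt_and_eq hs').2]
  have hle := le_prevSameLabel hlt hj
  rw [← he] at hle
  exact (prevSameLabel_lt_and_eq hs).1.not_ge hle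

end SameLabel

theorem zCB_sq_le {n : ℕ} (j : Fin n → V) (m : Fin n → ℕ) (s : Fin n) :
    zCB src tgt j m s ^ 2
      ≤ if (earlierSameLabel j s).Nonempty then (m (prevSameLabel j s) : ℤ) ^ 2 else 0 := by
  rw [zCB]
  split_ifs <;> simp_all [prevSameLabel, earlierSameLabel]

theorem sum_sq_zCB_le {n : ℕ} (j : Fin n → V) (m : Fin n → ℕ) :
    ∑ s, zCB src tgt j m s ^ 2 ≤ ∑ s, (m s : ℤ) ^ 2 :=
  calc ∑ s, zCB src tgt j m s ^ 2
      ≤ ∑ s with (earlierSameLabel j s).Nonempty, (m (prevSameLabel j s) : ℤ) ^ 2 := by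
        rw [sum_filter]
        exact sum_le_sum fun s _ => zCB_sq_le src tgt j m s
    _ = ∑ t ∈ image (prevSameLabel j) {s | (earlierSameLabel j s).Nonempty}, (m t : ℤ) ^ 2 := by
        rw [sum_image]
        exact prevSameLabel_injOn.mono fun _ hs => (mem_filter.1 hs).2
    _ ≤ ∑ t, (m t : ℤ) ^ 2 := sum_le_univ_sum_of_nonneg fun _ => sq_nonneg _

theorem sum_mul_zCB_le_sum_sq {n : ℕ} (j : Fin n → V) (m : Fin n → ℕ) :
    ∑ s, (m s : ℤ) * zCB src tgt j m s ≤ ∑ s, (m s : ℤ) ^ 2 := by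
  have hamgm := sum_le_sum fun s (_ : s ∈ univ) => two_mul_le_add_sq (m s : ℤ) (zCB src tgt j m s)
  simp only [mul_assoc, ← mul_sum, sum_add_distrib] at hamgm
  linarith [sum_sq_zCB_le src tgt j m]

theorem stmt_12
    (hloops : ∀ i : V, 2 ≤ (Finset.univ.filter
        (fun a : A => src a = i ∧ tgt a = i)).card)
    (dimZ : ℕ)
    (hCB : ∃ (h : ℕ) (j : Fin h → V) (m : Fin h → ℕ),
        (∀ s, 1 ≤ m s)
        ∧ (∀ i : V, ∑ s ∈ Finset.univ.filter (fun s => j s = i), m s = d i)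
        ∧ (dimZ : ℤ) ≤ cbBound src tgt d j m) :
    (dimZ : ℤ)
      < 2 * (1 - eulerForm src tgt (fun i => (d i : ℤ)) (fun i => (d i : ℤ))) := by
  obtain ⟨_, j, m, -, -, hdimZ_le⟩ := hCB
  have hvertex := eulerForm_eps_self_le_neg_one src tgt hloops
  have hd : eulerForm src tgt (fun i => (d i : ℤ)) (fun i => (d i : ℤ)) ≤ -∑ i, (d i : ℤ) ^ 2 :=
    calc _ ≤ ∑ i, eulerForm src tgt (eps i) (eps i) * (d i : ℤ) ^ 2 :=
          eulerForm_le_sum_eulerForm_eps_mul_sq src tgt d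
      _ ≤ ∑ i, -1 * (d i : ℤ) ^ 2 := by gcongr with i; exact hvertex i
      _ = _ := by simp
  have hm : ∑ s, (m s : ℤ) ^ 2 * 2
      ≤ ∑ s, (m s : ℤ) ^ 2 * (1 - eulerForm src tgt (eps (j s)) (eps (j s))) := by
    gcongr with s
    linarith [hvertex (j s)]
  have hm_nonneg : 0 ≤ ∑ s, (m s : ℤ) ^ 2 := sum_nonneg fun _ _ => sq_nonneg _
  rw [← sum_mul] at hm
  rw [cbBound] at hdimZ_le
  linarith [sum_mul_zCB_le_sum_sq src tgt j m]

end
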